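/- Let Π ⊊ Σ_k be a proper subshift containing two distinct periodic orbits, and T : Π → Σ_k the map constructed from Π. Then ω_{B_*}(T(y)) = ∅ for every y ∈ Π. -/

import Mathlib

/-!
If `z ∈ ω_{B_*}(T y)`, the visits of `T y` to any ball around `z` form a syndetic set, with
gaps at most some `N`. Every word of `P`, in particular every long prefix of a point `p ∈ P`,
is some `C_n`, and `T y` reads `C_n` right after its prefix `A_n`; a visit among the first `N`
positions of this copy of `C_n` puts `z` close to the orbit of `p`. Hence `z` lies in the orbit
closure of every point of `P`. A periodic orbit is finite, so `z` would lie on both of two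
distinct periodic orbits.
-/

open Filter Topology MeasureTheory

/-- Upper density of a set of naturals. -/
noncomputable def upperDensity (S : Set ℕ) : ℝ :=
  Filter.limsup (fun n => ((S ∩ Set.Iio n).ncard : ℝ) / n) Filter.atTop

/-- Lower density of a set of naturals. -/
noncomputable def lowerDensity (S : Set ℕ) : ℝ :=
  Filter.liminf (fun n => ((S ∩ Set.Iio n).ncard : ℝ) / n) Filter.atTop

/-- Banach upper density: limsup over the interval length of the maximal
proportion of `S` in an interval of that length. -/
noncomputable def banachUpperDensity (S : Set ℕ) : ℝ :=
  Filter.limsup (fun N => ⨆ a : ℕ, ((S ∩ Set.Ico a (a + N)).ncard : ℝ) / N) Filter.atTop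

/-- Banach lower density. -/
noncomputable def banachLowerDensity (S : Set ℕ) : ℝ :=
  Filter.liminf (fun N => ⨅ a : ℕ, ((S ∩ Set.Ico a (a + N)).ncard : ℝ) / N) Filter.atTop

/-- The shift map on the full shift `Σ_k = {0, …, k-1}^ℕ`. -/
def shift {k : ℕ} (x : ℕ → Fin k) : ℕ → Fin k := fun n => x (n + 1)

/-- The metric `d(x,y) = Σ_{n ≥ 1} δ(x_n, y_n)/2^n` on `Σ_k` (sequences indexed from `0`). -/
noncomputable def shiftDist {k : ℕ} (x y : ℕ → Fin k) : ℝ :=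
  ∑' n : ℕ, if x n = y n then 0 else (1 / 2) ^ (n + 1)

/-- The open ball `B_ε(x)` for the metric `shiftDist`. -/
def sball {k : ℕ} (x : ℕ → Fin k) (ε : ℝ) : Set (ℕ → Fin k) := {y | shiftDist x y < ε}

/-- `N(x, U) = {n ≥ 1 : σ^n(x) ∈ U}`. -/
def visits {k : ℕ} (x : ℕ → Fin k) (U : Set (ℕ → Fin k)) : Set ℕ :=
  {n | 1 ≤ n ∧ shift^[n] x ∈ U}

/-- A point is recurrent if `N(x, B_ε(x)) ≠ ∅` for every `ε > 0`. -/
def Recurrent {k : ℕ} (x : ℕ → Fin k) : Prop := ∀ ε > (0 : ℝ), (visits x (sball x ε)).Nonempty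

/-- A point is Banach recurrent if `N(x, B_ε(x))` has positive Banach upper density
for every `ε > 0`. -/
def BanachRecurrent {k : ℕ} (x : ℕ → Fin k) : Prop :=
  ∀ ε > (0 : ℝ), 0 < banachUpperDensity (visits x (sball x ε))

/-- Statistical ω-limit set w.r.t. a density notion `ξ`:
`ω_ξ(x) = {y : ξ(N(x, B_ε(y))) > 0 for all ε > 0}`. -/
def statOmega {k : ℕ} (ξ : Set ℕ → ℝ) (x : ℕ → Fin k) : Set (ℕ → Fin k) :=
  {y | ∀ ε > (0 : ℝ), 0 < ξ (visits x (sball y ε))}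

/-- The usual ω-limit set of `x` under the shift. -/
def omegaLim {k : ℕ} (x : ℕ → Fin k) : Set (ℕ → Fin k) :=
  {y | ∀ ε > (0 : ℝ), ∀ N : ℕ, ∃ n ≥ N, shift^[n] x ∈ sball y ε}

/-- Density of a subset of `Σ_k` w.r.t. the metric `shiftDist`. -/
def ShiftDense {k : ℕ} (A : Set (ℕ → Fin k)) : Prop :=
  ∀ x : ℕ → Fin k, ∀ ε > (0 : ℝ), ∃ y ∈ A, shiftDist x y < ε

/-- Closure of a subset of `Σ_k` w.r.t. the metric `shiftDist`. -/
def shiftClosure {k : ℕ} (A : Set (ℕ → Fin k)) : Set (ℕ → Fin k) :=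
  {z | ∀ ε > (0 : ℝ), ∃ y ∈ A, shiftDist z y < ε}

/-- `Φ^{(n)}_{xy}(t)`: the proportion of times `0 ≤ i < n` with `d(σ^i x, σ^i y) < t`. -/
noncomputable def PhiN {k : ℕ} (x y : ℕ → Fin k) (n : ℕ) (t : ℝ) : ℝ :=
  (({i | i < n ∧ shiftDist (shift^[i] x) (shift^[i] y) < t}).ncard : ℝ) / n

/-- A pair is DC1 (distributionally chaotic of type 1) if `Φ_{xy}(s) = 0` for some `s > 0`
and `Φ*_{xy}(t) = 1` for all `t > 0`. -/
def DC1Pair {k : ℕ} (x y : ℕ → Fin k) : Prop :=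
  (∃ s > (0 : ℝ), Filter.liminf (fun n => PhiN x y n s) Filter.atTop = 0) ∧
  (∀ t > (0 : ℝ), Filter.limsup (fun n => PhiN x y n t) Filter.atTop = 1)

/-- A set with at least two points is DC1-scrambled if every pair of distinct points is DC1. -/
def DC1Scrambled {k : ℕ} (S : Set (ℕ → Fin k)) : Prop :=
  S.Nontrivial ∧ ∀ x ∈ S, ∀ y ∈ S, x ≠ y → DC1Pair x y

/-- `strictOrEq true A B` means `A ⊊ B`; `strictOrEq false A B` means `A = B`. -/
def strictOrEq {α : Type*} (b : Bool) (A B : Set α) : Prop := if b then A ⊂ B else A = B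

/-- The patterns of (strict ⊊ = `true` / equality = `false`) for the three inclusions
`ω_{B_*} ⊆ ω_{d̲} ⊆ ω_{d̄} ⊆ ω_{B*}` in Cases (1)–(6). -/
def caseFlags : Fin 6 → Bool × Bool × Bool :=
  ![(true, false, false), (true, false, true), (false, true, false),
    (true, true, false), (false, true, true), (true, true, true)]

/-- `x` satisfies Case (i), i = 1,…,6: the chain
`ω_{B_*}(x) ⊆ ω_{d̲}(x) ⊆ ω_{d̄}(x) ⊆ ω_{B*}(x) = ω_σ(x)` with strictness pattern given by
`caseFlags i`, and the last inclusion an equality. -/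
def SatCase {k : ℕ} (i : Fin 6) (x : ℕ → Fin k) : Prop :=
  strictOrEq (caseFlags i).1 (statOmega banachLowerDensity x) (statOmega lowerDensity x) ∧
  strictOrEq (caseFlags i).2.1 (statOmega lowerDensity x) (statOmega upperDensity x) ∧
  strictOrEq (caseFlags i).2.2 (statOmega upperDensity x) (statOmega banachUpperDensity x) ∧
  statOmega banachUpperDensity x = omegaLim x

/-- `x` satisfies Case (i'), i = 1,…,6: as in Case (i) but the last inclusion
`ω_{B*}(x) ⊆ ω_σ(x)` is strict. -/
def SatCase' {k : ℕ} (i : Fin 6) (x : ℕ → Fin k) : Prop :=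
  strictOrEq (caseFlags i).1 (statOmega banachLowerDensity x) (statOmega lowerDensity x) ∧
  strictOrEq (caseFlags i).2.1 (statOmega lowerDensity x) (statOmega upperDensity x) ∧
  strictOrEq (caseFlags i).2.2 (statOmega upperDensity x) (statOmega banachUpperDensity x) ∧
  statOmega banachUpperDensity x ⊂ omegaLim x
/-- A subshift: a nonempty, closed (w.r.t. the metric `shiftDist`), shift-invariant subset. -/
def IsSubshift {k : ℕ} (P : Set (ℕ → Fin k)) : Prop :=
  P.Nonempty ∧ shiftClosure P ⊆ P ∧ ∀ x ∈ P, shift x ∈ P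

/-- The first `n` symbols of `y` as a finite word. -/
def prefixWord {k : ℕ} (y : ℕ → Fin k) (n : ℕ) : List (Fin k) :=
  List.ofFn (fun i : Fin n => y i)

/-- A finite word occurs in (the language of) `P` if it is the initial word of
some point of `P`. -/
def IsWordIn {k : ℕ} (w : List (Fin k)) (P : Set (ℕ → Fin k)) : Prop :=
  ∃ x ∈ P, ∀ i : Fin w.length, x i = w.get i

/-- Data for the construction of the map `T`: an enumeration `C` of all (nonempty) finite
words of the subshift `P`, and a nonempty finite word `A1` not occurring in `P`. -/
structure TData (k : ℕ) (P : Set (ℕ → Fin k)) where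
  C : ℕ → List (Fin k)
  A1 : List (Fin k)
  A1_ne : A1 ≠ []
  A1_not : ¬ IsWordIn A1 P
  C_in : ∀ n, IsWordIn (C n) P
  C_surj : ∀ w : List (Fin k), w ≠ [] → IsWordIn w P → ∃ n, C n = w

/-- The words `A_n` of the construction (indexed from `0`, so `TData.A y 0` is the
paper's `A_1`): `A_{n+1} = A_n B_n A_n`, where `B_n = C_n Y_n ⋯ Y_n` consists of the
word `C_n` followed by `|A_n|²` copies of the initial word `Y_n` of `y` (paper's `Y_n`,
of length `n`, is `prefixWord y (n+1)` in our `0`-based indexing). -/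
def TData.A {k : ℕ} {P : Set (ℕ → Fin k)} (D : TData k P) (y : ℕ → Fin k) :
    ℕ → List (Fin k)
  | 0 => D.A1
  | n + 1 =>
      D.A y n ++
        (D.C n ++ (List.replicate ((D.A y n).length ^ 2) (prefixWord y (n + 1))).flatten) ++
        D.A y n

/-- The requirement `|C_n| = o(|A_n|)` as `n → ∞`. -/
def TData.Small {k : ℕ} {P : Set (ℕ → Fin k)} (D : TData k P) : Prop :=
  ∀ y : ℕ → Fin k,
    Filter.Tendsto (fun n => ((D.C n).length : ℝ) / ((D.A y n).length))
      Filter.atTop (nhds 0)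

/-- The map `T`: `T(y) = lim_n A_n` is the sequence whose `i`-th symbol is the `i`-th
symbol of `A_n` for every large `n` (the words `A_n` are nested prefixes of each other,
and `|A_{i+1}| > i`, so the `i`-th symbol of `A_{i+1}` is well defined). -/
def TData.T {k : ℕ} {P : Set (ℕ → Fin k)} (D : TData k P) (y : ℕ → Fin k) : ℕ → Fin k :=
  fun i => if h : i < (D.A y (i + 1)).length then (D.A y (i + 1)).get ⟨i, h⟩ else y i


lemma shift_iterate_apply {k : ℕ} (x : ℕ → Fin k) (n i : ℕ) : shift^[n] x i = x (n + i) := by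
  induction n generalizing x with
  | zero => simp
  | succ n ih =>
    rw [Function.iterate_succ_apply, ih, shift, Nat.add_right_comm, Nat.add_assoc]

section shiftDist

variable {k : ℕ} (x y z : ℕ → Fin k)

lemma summable_shiftDist :
    Summable fun n : ℕ => if x n = y n then (0 : ℝ) else (1 / 2) ^ (n + 1) :=
  (summable_geometric_two.mul_right (1 / 2)).of_nonneg_of_le (fun n => by positivity)
    fun n => by split_ifs <;> simp [pow_succ]

lemma le_shiftDist_of_ne {j : ℕ} (h : x j ≠ y j) : (1 / 2 : ℝ) ^ (j + 1) ≤ shiftDist x y := by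
  simpa [h, shiftDist] using (summable_shiftDist x y).le_tsum j fun n _ => by positivity

lemma shiftDist_pos_of_ne (h : x ≠ y) : 0 < shiftDist x y := by
  obtain ⟨j, hj⟩ := Function.ne_iff.mp h
  exact (pow_pos (by norm_num) _).trans_le (le_shiftDist_of_ne x y hj)

lemma shiftDist_triangle : shiftDist x z ≤ shiftDist x y + shiftDist y z := by
  rw [shiftDist, shiftDist, shiftDist,
    ← (summable_shiftDist x y).tsum_add (summable_shiftDist y z)]
  refine (summable_shiftDist x z).tsum_le_tsum (fun n => ?_)
    ((summable_shiftDist x y).add (summable_shiftDist y z))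
  by_cases hxy : x n = y n <;> by_cases hyz : y n = z n <;> by_cases hxz : x n = z n <;>
    simp_all

lemma shiftDist_le_of_forall_lt_eq {M : ℕ} (h : ∀ j < M, x j = y j) :
    shiftDist x y ≤ (1 / 2) ^ M := by
  have hbound : ∀ n, (if x n = y n then (0 : ℝ) else (1 / 2) ^ (n + 1)) ≤
      2⁻¹ * if M ≤ n then (2⁻¹ : ℝ) ^ n else 0 := fun n => by
    by_cases hn : M ≤ n
    · split_ifs <;> simp [pow_succ, mul_comm]
    · simp [h n (not_le.mp hn), hn]
  have hsum : Summable fun n : ℕ => if M ≤ n then (2⁻¹ : ℝ) ^ n else 0 :=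
    summable_geometric_two.indicator {n | M ≤ n} |>.congr fun n => by
      simp [Set.indicator_apply]
  calc shiftDist x y ≤ ∑' n, 2⁻¹ * if M ≤ n then (2⁻¹ : ℝ) ^ n else 0 :=
        (summable_shiftDist x y).tsum_le_tsum hbound (hsum.mul_left _)
    _ = (1 / 2) ^ M := by rw [tsum_mul_left, tsum_geometric_inv_two_ge]; simp

end shiftDist

lemma exists_forall_inter_Ico_nonempty_of_banachLowerDensity_pos {S : Set ℕ}
    (h : 0 < banachLowerDensity S) :
    ∃ N, ∀ a, (S ∩ Set.Ico a (a + N)).Nonempty := by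
  by_contra! hS
  refine (Filter.liminf_le_of_frequently_le (Filter.Eventually.of_forall fun N => ?_).frequently
    ⟨0, Filter.eventually_map.mpr (Filter.Eventually.of_forall fun N =>
      le_ciInf fun a => by positivity)⟩).not_gt h
  obtain ⟨a, ha⟩ := hS N
  exact (ciInf_le ⟨0, by rintro _ ⟨b, rfl⟩; positivity⟩ a).trans (by simp [ha])

namespace TData

variable {k : ℕ} {P : Set (ℕ → Fin k)} (D : TData k P) (y : ℕ → Fin k)

lemma length_A_succ (n : ℕ) :
    (D.A y (n + 1)).length = 2 * (D.A y n).length + (D.C n).length +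
      (D.A y n).length ^ 2 * (n + 1) := by
  simp only [TData.A, prefixWord, List.length_append, List.length_flatten, List.map_replicate,
    List.length_ofFn, List.sum_replicate, smul_eq_mul]
  ring

lemma length_A_pos (n : ℕ) : 0 < (D.A y n).length := by
  induction n with
  | zero => exact List.length_pos_iff.mpr D.A1_ne
  | succ n ih => rw [length_A_succ]; omega

lemma lt_length_A (n : ℕ) : n < (D.A y n).length := by
  induction n with
  | zero => exact D.length_A_pos y 0
  | succ n ih => rw [length_A_succ]; omega

lemma A_prefix_of_le {n m : ℕ} (h : n ≤ m) : D.A y n <+: D.A y m := by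
  induction m, h using Nat.le_induction with
  | base => exact List.prefix_refl _
  | succ m _ ih => exact ih.trans ((List.prefix_append _ _).trans (List.prefix_append _ _))

lemma T_eq_getElem {m i : ℕ} (hi : i < (D.A y m).length) : D.T y i = (D.A y m)[i] := by
  have hi' : i < (D.A y (i + 1)).length := (Nat.lt_succ_self i).trans (D.lt_length_A y _)
  rw [TData.T, dif_pos hi', List.get_eq_getElem]
  rcases le_total (i + 1) m with h | h
  · exact (D.A_prefix_of_le y h).getElem hi'
  · exact ((D.A_prefix_of_le y h).getElem hi).symm

lemma T_length_A_add {n t : ℕ} (ht : t < (D.C n).length) :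
    D.T y ((D.A y n).length + t) = (D.C n)[t] := by
  have hlt : (D.A y n).length + t < (D.A y (n + 1)).length := by rw [length_A_succ]; omega
  rw [D.T_eq_getElem y hlt]
  simp only [TData.A, List.append_assoc]
  rw [List.getElem_append_right (by omega)]
  simp [List.getElem_append_left ht]

lemma exists_shiftDist_iterate_lt {z p : ℕ → Fin k}
    (hz : z ∈ statOmega banachLowerDensity (D.T y)) (hp : p ∈ P) {ε : ℝ} (hε : 0 < ε) :
    ∃ t, shiftDist z (shift^[t] p) < ε := by
  obtain ⟨M, hM⟩ := exists_pow_lt_of_lt_one (half_pos hε) (by norm_num : (1 / 2 : ℝ) < 1)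
  obtain ⟨N, hN⟩ :=
    exists_forall_inter_Ico_nonempty_of_banachLowerDensity_pos (hz (ε / 2) (half_pos hε))
  have hN0 : 0 < N := by
    obtain ⟨_, -, -, h⟩ := hN 0
    omega
  obtain ⟨n, hn⟩ := D.C_surj (prefixWord p (N + M))
    (by simp only [prefixWord, ne_eq, List.ofFn_eq_nil_iff]; omega)
    ⟨p, hp, fun i => by rw [List.get_eq_getElem]; simp [prefixWord]⟩
  -- a visit to `B_{ε/2}(z)` while `T y` reads the first `N` symbols of `C_n`
  obtain ⟨_, ⟨-, hvisit⟩, hle, hlt⟩ := hN (D.A y n).length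
  obtain ⟨t, rfl⟩ := Nat.exists_eq_add_of_le hle
  have hagree : ∀ j < M, shift^[(D.A y n).length + t] (D.T y) j = shift^[t] p j := by
    intro j hj
    rw [shift_iterate_apply, shift_iterate_apply, Nat.add_assoc,
      D.T_length_A_add y (by rw [hn]; simp only [prefixWord, List.length_ofFn]; omega)]
    simp only [hn, prefixWord, List.getElem_ofFn]
  refine ⟨t, ?_⟩
  calc shiftDist z (shift^[t] p)
      ≤ shiftDist z (shift^[(D.A y n).length + t] (D.T y)) +
          shiftDist (shift^[(D.A y n).length + t] (D.T y)) (shift^[t] p) :=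
        shiftDist_triangle _ _ _
    _ < ε / 2 + ε / 2 :=
        add_lt_add_of_lt_of_le hvisit ((shiftDist_le_of_forall_lt_eq _ _ hagree).trans hM.le)
    _ = ε := add_halves ε

end TData

lemma exists_eq_iterate_of_forall_shiftDist_lt {k m : ℕ} {p z : ℕ → Fin k}
    (hp : Function.IsPeriodicPt shift m p) (hm : 0 < m)
    (h : ∀ ε > (0 : ℝ), ∃ t, shiftDist z (shift^[t] p) < ε) : ∃ r, z = shift^[r] p := by
  obtain ⟨r, -, hr⟩ := (Finset.range m).exists_min_image (fun r => shiftDist z (shift^[r] p))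
    ⟨0, Finset.mem_range.mpr hm⟩
  refine ⟨r, by_contra fun hne => ?_⟩
  obtain ⟨t, ht⟩ := h _ (shiftDist_pos_of_ne _ _ hne)
  rw [← hp.iterate_mod_apply] at ht
  exact (hr _ (Finset.mem_range.mpr (Nat.mod_lt t hm))).not_gt ht

lemma Function.IsPeriodicPt.exists_iterate_eq_of_iterate_eq {α : Type*} {f : α → α} {p q : α}
    {m r s : ℕ} (hq : Function.IsPeriodicPt f m q) (hm : 0 < m) (h : f^[s] q = f^[r] p) :
    ∃ n, f^[n] p = q := by
  refine ⟨s * m - s + r, ?_⟩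
  rw [Function.iterate_add_apply, ← h, ← Function.iterate_add_apply,
    Nat.sub_add_cancel (Nat.le_mul_of_pos_right s hm)]
  exact (hq.const_mul s).eq

theorem T_image_banachLower_omega_empty (k : ℕ)
    (P : Set (ℕ → Fin k))
    (hper : ∃ p ∈ P, ∃ q ∈ P, (∃ m ≥ 1, shift^[m] p = p) ∧ (∃ m ≥ 1, shift^[m] q = q) ∧
      ∀ n : ℕ, shift^[n] p ≠ q)
    (D : TData k P) (y : ℕ → Fin k) :
    statOmega banachLowerDensity (D.T y) = ∅ := by
  obtain ⟨p, hp, q, hq, ⟨mp, hmp, hpper⟩, ⟨mq, hmq, hqper⟩, hpq⟩ := hper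
  refine Set.eq_empty_iff_forall_notMem.mpr fun z hz => ?_
  obtain ⟨r, rfl⟩ := exists_eq_iterate_of_forall_shiftDist_lt hpper hmp
    fun ε hε => D.exists_shiftDist_iterate_lt y hz hp hε
  obtain ⟨s, hs⟩ := exists_eq_iterate_of_forall_shiftDist_lt hqper hmq
    fun ε hε => D.exists_shiftDist_iterate_lt y hz hq hε
  obtain ⟨n, hn⟩ := Function.IsPeriodicPt.exists_iterate_eq_of_iterate_eq hqper hmq hs.symm
  exact hpq n hn
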